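/- arXiv:2101.12687 — 2 statements merged into one kernel-verified Lean document; each statement's English description precedes it below -/
import Mathlib

section
/- Let λ* be a cardinal, n a natural number, and suppose we are given cardinals λ^α_i for α < κ (κ regular uncountable) and i ≤ n, together with a function maxpcf from sets of these cardinals to cardinals satisfying: (monotonicity) maxpcf(S) ≤ maxpcf(T) whenever S ⊆ T, (ultrafilter/column property) for every unbounded X ⊆ κ, maxpcf{λ^α_i : α ∈ X, i ≤ n} = λ*, and (finite union property) maxpcf(S ∪ T) = max(maxpcf S, maxpcf T). Then there exist i ≤ n and an unbounded X ⊆ κ such that maxpcf{λ^α_i : α ∈ Y} = λ* for every unbounded Y ⊆ X. -/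
open Cardinal

noncomputable section

/-- `X` is an unbounded subset of (the ordinals below) `κ`. -/
def Unb (κ : Cardinal) (X : Set Ordinal) : Prop :=
  X ⊆ Set.Iio κ.ord ∧ ∀ β < κ.ord, ∃ α ∈ X, β ≤ α

theorem exists_column_unbounded (κ lamStar : Cardinal)
    (hκreg : κ.IsRegular) (hκunc : ℵ₀ < κ)
    (n : ℕ) (lam : Ordinal → Fin (n + 1) → Cardinal)
    (maxpcf : Set Cardinal → Cardinal)
    (hmono : ∀ S T : Set Cardinal, S ⊆ T → maxpcf S ≤ maxpcf T)
    (hcol : ∀ X : Set Ordinal, Unb κ X →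
      maxpcf {c | ∃ α ∈ X, ∃ i : Fin (n + 1), c = lam α i} = lamStar)
    (hunion : ∀ S T : Set Cardinal, maxpcf (S ∪ T) = max (maxpcf S) (maxpcf T)) :
    ∃ i : Fin (n + 1), ∃ X : Set Ordinal, Unb κ X ∧
      ∀ Y ⊆ X, Unb κ Y → maxpcf {c | ∃ α ∈ Y, c = lam α i} = lamStar := by
  by_contra h
  push_neg at h
  -- each column maxpcf over an unbounded set is ≤ lamStar
  have hle : ∀ (Y : Set Ordinal), Unb κ Y → ∀ i : Fin (n + 1),
      maxpcf {c | ∃ α ∈ Y, c = lam α i} ≤ lamStar := by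
    intro Y hY i
    have hsub : {c | ∃ α ∈ Y, c = lam α i} ⊆
        {c | ∃ α ∈ Y, ∃ j : Fin (n + 1), c = lam α j} := by
      rintro c ⟨α, hα, hc⟩
      exact ⟨α, hα, i, hc⟩
    exact (hcol Y hY) ▸ hmono _ _ hsub
  -- build an unbounded set all of whose first m columns compute < lamStar
  have key : ∀ m : ℕ, ∃ Y : Set Ordinal, Unb κ Y ∧
      ∀ i : Fin (n + 1), (i : ℕ) < m →
        maxpcf {c | ∃ α ∈ Y, c = lam α i} < lamStar := by
    intro m
    induction m with
    | zero =>
      refine ⟨Set.Iio κ.ord, ⟨subset_rfl, fun β hβ => ⟨β, hβ, le_rfl⟩⟩,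
        fun i hi => absurd hi (Nat.not_lt_zero _)⟩
    | succ m ih =>
      obtain ⟨Y, hY, hYlt⟩ := ih
      by_cases hm : m < n + 1
      · obtain ⟨Y', hY'sub, hY'unb, hY'ne⟩ := h ⟨m, hm⟩ Y hY
        refine ⟨Y', hY'unb, fun i hi => ?_⟩
        rcases lt_or_eq_of_le (Nat.lt_succ_iff.mp hi) with h' | h'
        · refine lt_of_le_of_lt (hmono _ _ ?_) (hYlt i h')
          rintro c ⟨α, hα, hc⟩
          exact ⟨α, hY'sub hα, hc⟩
        · have hieq : i = ⟨m, hm⟩ := Fin.ext h'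
          subst hieq
          exact lt_of_le_of_ne (hle Y' hY'unb _) hY'ne
      · refine ⟨Y, hY, fun i _ => hYlt i ?_⟩
        exact lt_of_lt_of_le i.isLt (not_lt.mp hm)
  obtain ⟨Y, hY, hlt⟩ := key (n + 1)
  have hlt' : ∀ i : Fin (n + 1), maxpcf {c | ∃ α ∈ Y, c = lam α i} < lamStar :=
    fun i => hlt i i.isLt
  -- partial unions of columns
  have step : ∀ k : ℕ, k ≤ n + 1 →
      maxpcf {c | ∃ α ∈ Y, ∃ i : Fin (n + 1), (i : ℕ) < k ∧ c = lam α i} < lamStar := by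
    intro k
    induction k with
    | zero =>
      intro _
      refine lt_of_le_of_lt (hmono _ {c | ∃ α ∈ Y, c = lam α 0} ?_) (hlt' 0)
      rintro c ⟨α, hα, i, hi, hc⟩
      exact absurd hi (Nat.not_lt_zero _)
    | succ k ih =>
      intro hk
      have hk' : k < n + 1 := hk
      have hset : {c | ∃ α ∈ Y, ∃ i : Fin (n + 1), (i : ℕ) < k + 1 ∧ c = lam α i} =
          {c | ∃ α ∈ Y, ∃ i : Fin (n + 1), (i : ℕ) < k ∧ c = lam α i} ∪
          {c | ∃ α ∈ Y, c = lam α ⟨k, hk'⟩} := by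
        ext c
        constructor
        · rintro ⟨α, hα, i, hi, hc⟩
          rcases lt_or_eq_of_le (Nat.lt_succ_iff.mp hi) with h' | h'
          · exact Or.inl ⟨α, hα, i, h', hc⟩
          · refine Or.inr ⟨α, hα, ?_⟩
            have : i = ⟨k, hk'⟩ := Fin.ext h'
            rw [← this]; exact hc
        · rintro (⟨α, hα, i, hi, hc⟩ | ⟨α, hα, hc⟩)
          · exact ⟨α, hα, i, Nat.lt_succ_of_lt hi, hc⟩
          · exact ⟨α, hα, ⟨k, hk'⟩, Nat.lt_succ_self k, hc⟩
      rw [hset, hunion]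
      exact max_lt (ih (Nat.le_of_succ_le hk)) (hlt' ⟨k, hk'⟩)
  have hfinal := step (n + 1) le_rfl
  have hsub : {c | ∃ α ∈ Y, ∃ i : Fin (n + 1), c = lam α i} ⊆
      {c | ∃ α ∈ Y, ∃ i : Fin (n + 1), (i : ℕ) < n + 1 ∧ c = lam α i} := by
    rintro c ⟨α, hα, i, hc⟩
    exact ⟨α, hα, i, i.isLt, hc⟩
  have := lt_of_le_of_lt (hmono _ _ hsub) hfinal
  rw [hcol Y hY] at this
  exact lt_irrefl _ this
end
end

section
/- (Abstract continuity gives representation at limits) Suppose μ is a singular cardinal, σ < θ regular with σ ≤ cf(μ) < θ, and λ a regular cardinal > μ. Assume the Continuity principle: if λ ∈ PP_{Γ(θ,σ)}(η) for an unbounded set of singular η < μ with σ ≤ cf(η) < θ < η, then λ ∈ PP_{Γ(θ,σ)}(μ). Assume also that the set X = {η ∈ X_{Γ(θ,σ)}(μ) : cf(η) ≤ cf(μ)} is unbounded in μ, where X_{Γ(θ,σ)}(μ) is the set of η < μ with σ ≤ cf(η) < θ < η, η eventually Γ(θ,σ)-closed, and PP_{Γ(θ,σ)}(μ) ⊆ PP_{Γ(θ,σ)}(η).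 Assume furthermore that for eventually Γ(θ,σ)-closed η, PP_{Γ(θ,σ)}(η) = PP_{Γ((cf η)⁺,σ)}(η) (Theorem 3.4). Then PP_{Γ(θ,σ)}(μ) = PP_{Γ((cf μ)⁺,σ)}(μ) = PP_{Γ(σ)}(μ). -/
open Cardinal

noncomputable section

/-- `J` is a (proper) ideal of subsets of `A`. -/
def IsIdealOn (A : Set Cardinal.{0}) (J : Set (Set Cardinal.{0})) : Prop :=
  (∀ B ∈ J, B ⊆ A) ∧ (∅ : Set Cardinal.{0}) ∈ J ∧ A ∉ J ∧
  (∀ B ∈ J, ∀ B' : Set Cardinal.{0}, B' ⊆ B → B' ∈ J) ∧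
  (∀ B ∈ J, ∀ B' ∈ J, B ∪ B' ∈ J)

/-- `J` is closed under unions of fewer than `σ` of its members. -/
def SigmaComplete (σ : Cardinal.{0}) (J : Set (Set Cardinal.{0})) : Prop :=
  ∀ 𝒜 : Set (Set Cardinal.{0}), 𝒜 ⊆ J → #𝒜 < Cardinal.lift.{1,0} σ → ⋃₀ 𝒜 ∈ J

/-- `J` contains every subset of `A` that is bounded below `μ`. -/
def ExtendsBounded (μ : Cardinal.{0}) (A : Set Cardinal.{0}) (J : Set (Set Cardinal.{0})) : Prop :=
  ∀ B : Set Cardinal.{0}, B ⊆ A → (∃ c < μ, ∀ b ∈ B, b < c) → B ∈ J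

/-- `f < g` modulo the ideal `J` on `A` (for functions with domain containing `A`,
with values viewed as ordinals below each `a ∈ A`). -/
def ltMod (A : Set Cardinal.{0}) (J : Set (Set Cardinal.{0})) (f g : Cardinal.{0} → Ordinal.{0}) : Prop :=
  {a ∈ A | g a ≤ f a} ∈ J

/-- `lam` is the true cofinality of `∏ A / J`: there is a `<_J`-increasing and
cofinal sequence of length `lam` in the product. -/
def IsTrueCofinality (A : Set Cardinal.{0}) (J : Set (Set Cardinal.{0})) (lam : Cardinal.{0}) : Prop :=
  ∃ f : Ordinal.{0} → (Cardinal.{0} → Ordinal.{0}),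
    (∀ α < lam.ord, ∀ a ∈ A, f α a < a.ord) ∧
    (∀ α β : Ordinal, α < β → β < lam.ord → ltMod A J (f α) (f β)) ∧
    (∀ g : Cardinal.{0} → Ordinal.{0}, (∀ a ∈ A, g a < a.ord) →
      ∃ α < lam.ord, ltMod A J g (f α))

/-- `pcf A`: the set of cardinals arising as the true cofinality of `∏ A / J`
for some ideal `J` on `A`. -/
def pcf (A : Set Cardinal.{0}) : Set Cardinal.{0} :=
  {lam | ∃ J, IsIdealOn A J ∧ IsTrueCofinality A J lam}

/-- `σ`-complete pcf. -/
def pcfSigma (σ : Cardinal.{0}) (A : Set Cardinal.{0}) : Set Cardinal.{0} :=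
  {lam | ∃ J, IsIdealOn A J ∧ SigmaComplete σ J ∧ IsTrueCofinality A J lam}

/-- `(A, J)` is a representation of `lam` at the singular cardinal `μ`:
`A` is a progressive cofinal set of regular cardinals below `μ`, `J` is an ideal
on `A` extending the bounded ideal, `lam = tcf(∏ A / J)`, and `lam = max pcf A`. -/
def IsRepresentation (μ lam : Cardinal.{0}) (A : Set Cardinal.{0}) (J : Set (Set Cardinal.{0})) : Prop :=
  (∀ a ∈ A, a.IsRegular ∧ a < μ) ∧
  (∀ c < μ, ∃ a ∈ A, c ≤ a) ∧
  #A < Cardinal.lift.{1,0} (sInf A) ∧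
  IsIdealOn A J ∧ ExtendsBounded μ A J ∧
  IsTrueCofinality A J lam ∧
  lam ∈ pcf A ∧ (∀ lam' ∈ pcf A, lam' ≤ lam)

/-- `lam` is `Γ(θ,σ)`-representable at `μ`. -/
def GammaRepresentable (μ lam θ σ : Cardinal.{0}) : Prop :=
  ∃ A J, IsRepresentation μ lam A J ∧ #A < Cardinal.lift.{1,0} θ ∧ SigmaComplete σ J

/-- `PP_{Γ(θ,σ)}(μ)`. -/
def PP (μ θ σ : Cardinal.{0}) : Set Cardinal.{0} := {lam | GammaRepresentable μ lam θ σ}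

/-- `pp_{Γ(θ,σ)}(μ)`. -/
def pp (μ θ σ : Cardinal.{0}) : Cardinal := sSup (PP μ θ σ)

/-- `μ` is a singular cardinal. -/
def Sing (μ : Cardinal.{0}) : Prop := ℵ₀ ≤ μ ∧ ¬μ.IsRegular

/-- `μ` is eventually `Γ(θ,σ)`-closed. -/
def EvClosed (μ θ σ : Cardinal.{0}) : Prop :=
  ∃ ξ < μ, ∀ ν, ξ < ν → ν < μ → Sing ν → σ ≤ ν.ord.cof → ν.ord.cof < θ →
    pp ν θ σ < μ

/-
Every `λ ∈ PP_{Γ(θ,σ)}(μ)` lies in `PP_{Γ(θ,σ)}(η)` for the unboundedly many eventually closed `η`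
with `cf η ≤ cf μ`; there Theorem 3.4 and monotonicity in `θ` put it in `PP_{Γ((cf μ)⁺,σ)}(η)`,
and continuity with `θ` replaced by `(cf μ)⁺` lifts it back to `PP_{Γ((cf μ)⁺,σ)}(μ)`. The
reverse inclusion is monotonicity, since `(cf μ)⁺ ≤ θ`.
-/

theorem PP_subset_PP_of_le (μ σ : Cardinal.{0}) {θ₁ θ₂ : Cardinal.{0}} (h : θ₁ ≤ θ₂) :
    PP μ θ₁ σ ⊆ PP μ θ₂ σ := by
  rintro lam ⟨A, J, hrep, hcard, hcomplete⟩
  exact ⟨A, J, hrep, hcard.trans_le (lift_le.2 h), hcomplete⟩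

theorem isRegular_succ_cof_ord {μ : Cardinal.{0}} (hμ : ℵ₀ ≤ μ) :
    (Order.succ μ.ord.cof).IsRegular :=
  isRegular_succ (Ordinal.aleph0_le_cof_iff.2 (Ordinal.one_lt_cof_iff.2 (isSuccLimit_ord hμ)))

theorem PP_eq_of_unbounded_closed_general (μ σ θ : Cardinal.{0})
    (hμ : Sing μ)
    (h1 : σ ≤ μ.ord.cof) (h2 : μ.ord.cof < θ)
    (hcont : ∀ θ' lam : Cardinal.{0}, θ'.IsRegular → σ < θ' → μ.ord.cof < θ' →
      (∀ ξ < μ, ∃ η, ξ < η ∧ η < μ ∧ Sing η ∧ σ ≤ η.ord.cof ∧ η.ord.cof < θ' ∧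
        θ' < η ∧ lam ∈ PP η θ' σ) →
      lam ∈ PP μ θ' σ)
    (hX : ∀ ξ < μ, ∃ η, ξ < η ∧ η < μ ∧ Sing η ∧ σ ≤ η.ord.cof ∧ η.ord.cof < θ ∧
      θ < η ∧ EvClosed η θ σ ∧ PP μ θ σ ⊆ PP η θ σ ∧ η.ord.cof ≤ μ.ord.cof)
    (h34 : ∀ η, η < μ → Sing η → σ ≤ η.ord.cof → η.ord.cof < θ → EvClosed η θ σ →
      PP η θ σ = PP η (Order.succ η.ord.cof) σ) :
    PP μ θ σ = PP μ (Order.succ μ.ord.cof) σ := by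
  have hcf_lt : μ.ord.cof < Order.succ μ.ord.cof := Order.lt_succ _
  have hsucc_le : Order.succ μ.ord.cof ≤ θ := Order.succ_le_of_lt h2
  refine (PP_subset_PP_of_le μ σ hsucc_le).antisymm' fun lam hlam => ?_
  refine hcont _ lam (isRegular_succ_cof_ord hμ.1) (h1.trans_lt hcf_lt) hcf_lt fun ξ hξ => ?_
  obtain ⟨η, hξη, hημ, hηsing, hση, hηθ, hθη, hηclosed, hPP_sub, hcf_le⟩ := hX ξ hξ
  have hlam_η : lam ∈ PP η (Order.succ η.ord.cof) σ :=
    h34 η hημ hηsing hση hηθ hηclosed ▸ hPP_sub hlam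
  exact ⟨η, hξη, hημ, hηsing, hση, hcf_le.trans_lt hcf_lt, hsucc_le.trans_lt hθη,
    PP_subset_PP_of_le η σ (Order.succ_le_succ hcf_le) hlam_η⟩

theorem PP_eq_of_unbounded_closed (μ σ θ : Cardinal.{0})
    (hμ : Sing μ) (hσ : σ.IsRegular) (hθ : θ.IsRegular)
    (h1 : σ ≤ μ.ord.cof) (h2 : μ.ord.cof < θ)
    (hcont : ∀ θ' lam : Cardinal.{0}, θ'.IsRegular → σ < θ' → μ.ord.cof < θ' →
      (∀ ξ < μ, ∃ η, ξ < η ∧ η < μ ∧ Sing η ∧ σ ≤ η.ord.cof ∧ η.ord.cof < θ' ∧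
        θ' < η ∧ lam ∈ PP η θ' σ) →
      lam ∈ PP μ θ' σ)
    (hX : ∀ ξ < μ, ∃ η, ξ < η ∧ η < μ ∧ Sing η ∧ σ ≤ η.ord.cof ∧ η.ord.cof < θ ∧
      θ < η ∧ EvClosed η θ σ ∧ PP μ θ σ ⊆ PP η θ σ ∧ η.ord.cof ≤ μ.ord.cof)
    (h34 : ∀ η, η < μ → Sing η → σ ≤ η.ord.cof → η.ord.cof < θ → EvClosed η θ σ →
      PP η θ σ = PP η (Order.succ η.ord.cof) σ) :
    PP μ θ σ = PP μ (Order.succ μ.ord.cof) σ :=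
  PP_eq_of_unbounded_closed_general μ σ θ hμ h1 h2 hcont hX h34
end
end
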